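/- If |b_z| > |m| > 0, the Hamiltonian H(k) = [[-k·σ - b_z σ³, m·I₂],[m·I₂, k·σ - b_z σ³]] has a zero eigenvalue precisely at the two points k = (0,0,±√(b_z² − m²)) in momentum space. -/

import Mathlib

open Complex

/-- The 4×4 Weyl Hamiltonian
H(k) = [[-k·σ - b_z σ³, m I₂],[m I₂, k·σ - b_z σ³]] for k = (k_x,k_y,k_z). -/
noncomputable def weylH (bz m kx ky kz : ℝ) : Matrix (Fin 4) (Fin 4) ℂ :=
  !![(-(kz + bz) : ℂ), -((kx : ℂ) - Complex.I * ky), (m : ℂ), 0;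
     -((kx : ℂ) + Complex.I * ky), ((kz + bz : ℝ) : ℂ), 0, (m : ℂ);
     (m : ℂ), 0, ((kz - bz : ℝ) : ℂ), (kx : ℂ) - Complex.I * ky;
     0, (m : ℂ), (kx : ℂ) + Complex.I * ky, ((-kz + bz : ℝ) : ℂ)]

lemma weylH_det (bz m kx ky kz : ℝ) :
    (weylH bz m kx ky kz).det =
      (((bz ^ 2 - kx ^ 2 - ky ^ 2 - kz ^ 2 - m ^ 2) ^ 2
        + (2 * bz * kx) ^ 2 + (2 * bz * ky) ^ 2 : ℝ) : ℂ) := by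
  simp [weylH, Matrix.det_succ_row_zero, Fin.sum_univ_succ, Fin.val_succ, Fin.succAbove]
  push_cast
  ring_nf
  simp [Complex.I_sq]

/-- If |b_z| > |m| > 0, H(k) has a zero eigenvalue (det H(k) = 0) precisely at
the two points k = (0,0,±√(b_z² − m²)). -/
theorem weylH_zero_modes (bz m : ℝ) (hm : 0 < |m|) (hb : |m| < |bz|)
    (kx ky kz : ℝ) :
    (weylH bz m kx ky kz).det = 0 ↔
      (kx = 0 ∧ ky = 0 ∧
        (kz = Real.sqrt (bz ^ 2 - m ^ 2) ∨ kz = -Real.sqrt (bz ^ 2 - m ^ 2))) := by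
  have hbz : bz ≠ 0 := by
    intro h; rw [h] at hb; simp at hb; exact absurd hb (not_lt.2 (abs_nonneg m))
  have hpos : 0 < bz ^ 2 - m ^ 2 := by
    have := sq_lt_sq' (neg_lt_of_abs_lt hb) (lt_of_abs_lt hb)
    nlinarith [_root_.sq_abs m, _root_.sq_abs bz]
  rw [weylH_det, Complex.ofReal_eq_zero]
  constructor
  · intro h
    have h1 : (bz ^ 2 - kx ^ 2 - ky ^ 2 - kz ^ 2 - m ^ 2) = 0 ∧
        2 * bz * kx = 0 ∧ 2 * bz * ky = 0 := by
      constructor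
      · nlinarith [sq_nonneg (bz ^ 2 - kx ^ 2 - ky ^ 2 - kz ^ 2 - m ^ 2),
          sq_nonneg (2 * bz * kx), sq_nonneg (2 * bz * ky)]
      constructor
      · nlinarith [sq_nonneg (bz ^ 2 - kx ^ 2 - ky ^ 2 - kz ^ 2 - m ^ 2),
          sq_nonneg (2 * bz * kx), sq_nonneg (2 * bz * ky)]
      · nlinarith [sq_nonneg (bz ^ 2 - kx ^ 2 - ky ^ 2 - kz ^ 2 - m ^ 2),
          sq_nonneg (2 * bz * kx), sq_nonneg (2 * bz * ky)]
    obtain ⟨h1, h2, h3⟩ := h1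
    have hkx : kx = 0 := by
      rcases mul_eq_zero.1 h2 with h | h
      · rcases mul_eq_zero.1 h with h | h
        · norm_num at h
        · exact absurd h hbz
      · exact h
    have hky : ky = 0 := by
      rcases mul_eq_zero.1 h3 with h | h
      · rcases mul_eq_zero.1 h with h | h
        · norm_num at h
        · exact absurd h hbz
      · exact h
    refine ⟨hkx, hky, ?_⟩
    have hkz : kz ^ 2 = bz ^ 2 - m ^ 2 := by
      rw [hkx, hky] at h1; linarith
    have habs : |kz| = Real.sqrt (bz ^ 2 - m ^ 2) := by
      rw [← Real.sqrt_sq_eq_abs, hkz]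
    exact (abs_eq (Real.sqrt_nonneg _)).1 habs
  · rintro ⟨hkx, hky, hkz⟩
    have hkz2 : kz ^ 2 = bz ^ 2 - m ^ 2 := by
      rcases hkz with h | h <;> rw [h] <;>
        simp [Real.sq_sqrt hpos.le]
    rw [hkx, hky]
    nlinarith [hkz2]
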